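/- Let Ω = ⊕_{p≥0} Ω_p be an ℕ-graded associative unital ring, let d : Ω → Ω be an additive map with d(Ω_p) ⊆ Ω_{p+1} for all p, and let M be a left Ω-module; let Ω₊M denote the Ω-submodule of M generated by {α·ω : p ≥ 1, α ∈ Ω_p, ω ∈ M}. Let D : M → M be an additive map satisfying the Leibniz rule D(α·ω) = d(α)·ω + (−1)^p α·D(ω) for all p, α ∈ Ω_p, ω ∈ M, and let u : M → M be an Ω-module automorphism such that u(ω) − ω ∈ Ω₊M for every ω ∈ M. Then for every ω ∈ M, u⁻¹(D(u(ω))) − D(ω) ∈ Ω₊M. -/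

import Mathlib

/-!
Write `Ω₊M` (`positiveDegreeSubmodule`) for the span of the positive-degree multiples. The
Leibniz rule shows that `D` preserves `Ω₊M`: on `α • y` the term `d α • y` has degree `≥ 1`, and
the term `± α • D y` lies in `Ω₊M` whenever `α` has positive degree or `D y ∈ Ω₊M`. Since `u`,
and hence `u⁻¹`, move every element only by `Ω₊M`, so does `u⁻¹ ∘ D ∘ u` relative to `D`.
-/

def positiveDegreeSubmodule {A : Type*} [Ring A] (𝒜 : ℕ → AddSubgroup A)
    (M : Type*) [AddCommGroup M] [Module A M] : Submodule A M :=
  Submodule.span A {m : M | ∃ (p : ℕ), 1 ≤ p ∧ ∃ α ∈ 𝒜 p, ∃ ω' : M, m = α • ω'}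

theorem LinearEquiv.symm_apply_sub_mem {R M : Type*} [Ring R] [AddCommGroup M] [Module R M]
    {N : Submodule R M} (u : M ≃ₗ[R] M) (hu : ∀ x, u x - x ∈ N) (y : M) :
    u.symm y - y ∈ N := by
  simpa [neg_sub] using N.neg_mem (hu (u.symm y))

namespace positiveDegreeSubmodule

variable {A : Type*} [Ring A] {𝒜 : ℕ → AddSubgroup A} {M : Type*} [AddCommGroup M] [Module A M]

theorem smul_mem {p : ℕ} (hp : 1 ≤ p) {α : A} (hα : α ∈ 𝒜 p) (x : M) :
    α • x ∈ positiveDegreeSubmodule 𝒜 M :=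
  Submodule.subset_span ⟨p, hp, α, hα, x, rfl⟩

section Leibniz

variable {d : A →+ A} (hd : ∀ (p : ℕ), ∀ a ∈ 𝒜 p, d a ∈ 𝒜 (p + 1)) {D : M →+ M}
  (hD : ∀ (p : ℕ) (α : A), α ∈ 𝒜 p → ∀ ω : M,
    D (α • ω) = d α • ω + ((-1 : ℤ) ^ p) • (α • D ω))
include hd hD

theorem leibniz_apply_smul_mem {p : ℕ} {α : A} (hα : α ∈ 𝒜 p) {y : M}
    (h : α • D y ∈ positiveDegreeSubmodule 𝒜 M) : D (α • y) ∈ positiveDegreeSubmodule 𝒜 M := by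
  rw [hD p α hα y]
  exact add_mem (smul_mem p.succ_pos (hd p α hα) y) (zsmul_mem h _)

theorem leibniz_apply_mem [DirectSum.Decomposition 𝒜] {x : M}
    (hx : x ∈ positiveDegreeSubmodule 𝒜 M) : D x ∈ positiveDegreeSubmodule 𝒜 M := by
  induction hx using Submodule.span_induction with
  | mem _ hm =>
    obtain ⟨p, hp, α, hα, y, rfl⟩ := hm
    exact leibniz_apply_smul_mem hd hD hα (smul_mem hp hα (D y))
  | zero => simp
  | add _ _ _ _ hy hz => simpa using add_mem hy hz
  | smul a y _ hy =>
    induction a using DirectSum.Decomposition.inductionOn 𝒜 with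
    | zero => simp
    | homogeneous α => exact leibniz_apply_smul_mem hd hD α.2 (Submodule.smul_mem _ _ hy)
    | add a b ha hb => simpa [add_smul] using add_mem ha hb

end Leibniz

end positiveDegreeSubmodule

/-- Let `Ω = ⊕_{p≥0} Ω_p` be an ℕ-graded ring, `d` an additive map raising degree by one,
`M` a left `Ω`-module, `Ω₊M` the `Ω`-submodule generated by
`{α·ω : p ≥ 1, α ∈ Ω_p, ω ∈ M}`, and `D : M → M` an additive map satisfying the Leibniz
rule. If `u` is an `Ω`-module automorphism of `M` with `u(ω) - ω ∈ Ω₊M` for all `ω`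
(a gauge transformation), then `u⁻¹(D(u(ω))) - D(ω) ∈ Ω₊M` for all `ω`: gauge-equivalent
representations up to homotopy induce the same differential on `M / Ω₊M`. -/
theorem gauge_equivalent_same_induced_differential
    {A : Type*} [Ring A] (𝒜 : ℕ → AddSubgroup A) [GradedRing 𝒜]
    {M : Type*} [AddCommGroup M] [Module A M]
    (d : A →+ A) (hd : ∀ (p : ℕ), ∀ a ∈ 𝒜 p, d a ∈ 𝒜 (p + 1))
    (D : M →+ M)
    (hD : ∀ (p : ℕ) (α : A), α ∈ 𝒜 p → ∀ ω : M,
      D (α • ω) = d α • ω + ((-1 : ℤ) ^ p) • (α • D ω))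
    (u : M ≃ₗ[A] M)
    (hu : ∀ ω : M, u ω - ω ∈ Submodule.span A
      {m : M | ∃ (p : ℕ), 1 ≤ p ∧ ∃ α ∈ 𝒜 p, ∃ ω' : M, m = α • ω'}) :
    ∀ ω : M, u.symm (D (u ω)) - D ω ∈ Submodule.span A
      {m : M | ∃ (p : ℕ), 1 ≤ p ∧ ∃ α ∈ 𝒜 p, ∃ ω' : M, m = α • ω'} := by
  intro ω
  have h_symm : u.symm (D (u ω)) - D (u ω) ∈ positiveDegreeSubmodule 𝒜 M :=
    u.symm_apply_sub_mem hu _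
  have h_D : D (u ω) - D ω ∈ positiveDegreeSubmodule 𝒜 M := by
    simpa using positiveDegreeSubmodule.leibniz_apply_mem hd hD (hu ω)
  exact sub_add_sub_cancel _ (D (u ω)) _ ▸ add_mem h_symm h_D
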